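/- arXiv:0912.0586 — 2 statements merged into one kernel-verified Lean document; each statement's English description precedes it below -/
import Mathlib

section
/- Let x ∈ W, let i = (i₁,…,i_m) be a reduced word for the longest element w₀, and define v_l^i ∈ W by v_m^i = e and v_{l−1}^i = s_{i_l} v_l^i if l appears in the lexicographically minimal element of S(x w₀, i), and v_{l−1}^i = v_l^i otherwise. If l appears in min S(x w₀, i), then ℓ(v_{l−1}^i) = ℓ(v_l^i) + 1. -/
/-!
The elements `v_l` and `v_{l-1}` are the products of the letters of the subword `min S(x w₀, 𝐢)`
sitting at positions `> l` and `> l - 1`. Since `l` is one of these positions, the two words are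
suffixes of that subword differing by exactly one letter. The subword is a reduced expression of
`x w₀`, and every suffix of a reduced word is reduced (by subadditivity of the length), so the
lengths of `v_l` and `v_{l-1}` are the numbers of letters in those suffixes.
-/

/-- Minimal length of a word in the generators `s` expressing `x`. -/
noncomputable def wordLength {I W : Type*} [Monoid W] (s : I → W) (x : W) : ℕ :=
  sInf {n | ∃ il : List I, il.length = n ∧ (il.map s).prod = x}

/-- `il` is a reduced word for `x` in the generators `s`. -/
def IsReducedWord {I W : Type*} [Monoid W] (s : I → W) (x : W) (il : List I) : Prop :=
  (il.map s).prod = x ∧ il.length = wordLength s x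

/-- The (strong) Bruhat order, via the subword property: `y ≤ x` iff some reduced
word for `x` admits a subword whose product is `y`. -/
def BruhatLE {I W : Type*} [Monoid W] (s : I → W) (y x : W) : Prop :=
  ∃ il : List I, IsReducedWord s x il ∧ ∃ sub : List I, sub.Sublist il ∧ (sub.map s).prod = y

/-- `wl s il l` is `s_{i₁} ⋯ s_{i_l}`, the product of the first `l` letters of `il`. -/
def wl {I W : Type*} [Monoid W] (s : I → W) (il : List I) (l : ℕ) : W :=
  ((il.take l).map s).prod

/-- Membership in the set `S(x w₀, 𝐢)` of increasing position sequences (1-based)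
giving reduced subword expressions of `xw0` inside the word `il`. -/
def MemS {I W : Type*} [Monoid W] (s : I → W) (d : I) (xw0 : W) (il : List I)
    (A : List ℕ) : Prop :=
  List.Pairwise (· < ·) A ∧ (∀ a ∈ A, 1 ≤ a ∧ a ≤ il.length) ∧
    A.length = wordLength s xw0 ∧ (A.map (fun a => s (il.getD (a - 1) d))).prod = xw0

/-- `A` is the lexicographically minimal element of `S(x w₀, 𝐢)`. -/
def IsMinS {I W : Type*} [Monoid W] (s : I → W) (d : I) (xw0 : W) (il : List I)
    (A : List ℕ) : Prop :=
  MemS s d xw0 il A ∧ ∀ B : List ℕ, MemS s d xw0 il B → ¬ List.Lex (· < ·) B A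

/-- The element `y_l^𝐢 ∈ W` defined by the downward recursion `y_m = e`,
`y_{l-1} = y_l` if `l` appears in `A = min S(x w₀, 𝐢)`, and
`y_{l-1} = s_{β_l} y_l` otherwise, where `s_{β_l} = w_{l-1} s_{i_l} w_{l-1}⁻¹`. -/
def yVal {I W : Type*} [Group W] (s : I → W) (d : I) (il : List I) (A : List ℕ)
    (l : ℕ) : W :=
  ((List.range' (l + 1) (il.length - l)).map
    (fun t => if t ∈ A then 1 else
      wl s il (t - 1) * s (il.getD (t - 1) d) * (wl s il (t - 1))⁻¹)).prod

/-- The element `v_l^𝐢 ∈ W` defined by the downward recursion `v_m = e`,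
`v_{l-1} = s_{i_l} v_l` if `l` appears in `A = min S(x w₀, 𝐢)`, and
`v_{l-1} = v_l` otherwise. -/
def vVal {I W : Type*} [Monoid W] (s : I → W) (d : I) (il : List I) (A : List ℕ)
    (l : ℕ) : W :=
  ((List.range' (l + 1) (il.length - l)).map
    (fun t => if t ∈ A then s (il.getD (t - 1) d) else 1)).prod

section WordLength

variable {I W : Type*} [Monoid W] (s : I → W)

theorem wordLength_prod_le_length (u : List I) : wordLength s (u.map s).prod ≤ u.length :=
  Nat.sInf_le ⟨u, rfl, rfl⟩

theorem exists_word_length_eq_wordLength (u : List I) :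
    ∃ v : List I, (v.map s).prod = (u.map s).prod ∧ v.length = wordLength s (u.map s).prod := by
  obtain ⟨v, hlen, hprod⟩ := Nat.sInf_mem (s := {n | ∃ v : List I, v.length = n ∧
    (v.map s).prod = (u.map s).prod}) ⟨u.length, u, rfl, rfl⟩
  exact ⟨v, hprod, hlen⟩

theorem wordLength_prod_append_le (u v : List I) :
    wordLength s ((u ++ v).map s).prod ≤
      wordLength s (u.map s).prod + wordLength s (v.map s).prod := by
  obtain ⟨u', hu, hu'⟩ := exists_word_length_eq_wordLength s u
  obtain ⟨v', hv, hv'⟩ := exists_word_length_eq_wordLength s v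
  have := wordLength_prod_le_length s (u' ++ v')
  simp_all

theorem wordLength_prod_of_suffix {u w : List I} (hw : wordLength s (w.map s).prod = w.length)
    (huw : u <:+ w) : wordLength s (u.map s).prod = u.length := by
  obtain ⟨t, rfl⟩ := huw
  have := wordLength_prod_append_le s t u
  have := wordLength_prod_le_length s t
  have := wordLength_prod_le_length s u
  simp only [List.length_append] at hw
  omega

end WordLength

theorem List.prod_map_ite_one {α M : Type*} [Monoid M] (p : α → Prop) [DecidablePred p]
    (f : α → M) (l : List α) :
    (l.map fun a => if p a then f a else 1).prod = ((l.filter p).map f).prod := by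
  induction l with
  | nil => rfl
  | cons a l ih => by_cases h : p a <;> simp [h, ih]

theorem List.filter_mem_range'_eq_filter_lt {A : List ℕ} (hA : A.Pairwise (· < ·)) {n : ℕ}
    (hn : ∀ a ∈ A, a ≤ n) (k : ℕ) :
    (List.range' (k + 1) (n - k)).filter (· ∈ A) = A.filter (k < ·) := by
  refine ((List.pairwise_lt_range' ..).filter _).eq_of_mem_iff (hA.filter _) fun a => ?_
  simp only [List.mem_filter, List.mem_range'_1, decide_eq_true_eq]
  constructor
  · rintro ⟨hk, ha⟩; exact ⟨ha, by omega⟩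
  · rintro ⟨ha, hk⟩; exact ⟨by have := hn a ha; omega, ha⟩

theorem List.filter_lt_append_eq_right {u v : List ℕ} {k : ℕ} (hu : ∀ a ∈ u, a ≤ k)
    (hv : ∀ b ∈ v, k < b) : (u ++ v).filter (k < ·) = v := by
  rw [List.filter_append, List.filter_eq_nil_iff.2 fun a ha => by simpa using hu a ha,
    List.filter_eq_self.2 fun b hb => by simpa using hv b hb, List.nil_append]

theorem List.filter_lt_append_cons_eq {u v : List ℕ} {l : ℕ}
    (h : (u ++ l :: v).Pairwise (· < ·)) : (u ++ l :: v).filter (l < ·) = v := by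
  rw [List.pairwise_append, List.pairwise_cons] at h
  rw [← List.singleton_append, ← List.append_assoc]
  refine List.filter_lt_append_eq_right (fun a ha => ?_) h.2.1.1
  rcases List.mem_append.1 ha with ha | ha
  exacts [(h.2.2 a ha l List.mem_cons_self).le, (List.mem_singleton.1 ha).le]

theorem List.filter_pred_lt_append_cons_eq {u v : List ℕ} {l : ℕ}
    (h : (u ++ l :: v).Pairwise (· < ·)) (hl : 1 ≤ l) :
    (u ++ l :: v).filter (l - 1 < ·) = l :: v := by
  rw [List.pairwise_append, List.pairwise_cons] at h
  refine List.filter_lt_append_eq_right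
    (fun a ha => by have := h.2.2 a ha l List.mem_cons_self; omega) fun b hb => ?_
  rcases List.mem_cons.1 hb with rfl | hb
  · omega
  · have := h.2.1.1 b hb; omega

section MemS

variable {I W : Type*} [Monoid W] {s : I → W} {d : I} {xw0 : W} {il : List I} {A : List ℕ}

theorem MemS.wordLength_prod_of_suffix (hA : MemS s d xw0 il A) {t : List ℕ} (ht : t <:+ A) :
    wordLength s (t.map fun a => s (il.getD (a - 1) d)).prod = t.length := by
  obtain ⟨-, -, hlen, hprod⟩ := hA
  set g : ℕ → I := fun a => il.getD (a - 1) d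
  have hred : wordLength s ((A.map g).map s).prod = (A.map g).length := by
    rw [List.map_map, List.length_map]
    exact (congrArg (wordLength s) hprod).trans hlen.symm
  simpa only [List.map_map, List.length_map, Function.comp_def] using
    _root_.wordLength_prod_of_suffix s hred (ht.map g)

theorem MemS.vVal_eq_prod_filter (hA : MemS s d xw0 il A) (k : ℕ) :
    vVal s d il A k = ((A.filter (k < ·)).map fun a => s (il.getD (a - 1) d)).prod := by
  rw [vVal, List.prod_map_ite_one,
    List.filter_mem_range'_eq_filter_lt hA.1 fun a ha => (hA.2.1 a ha).2]

end MemS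

theorem vVal_length_succ_general {I W : Type*} [Group W] (s : I → W) (d : I)
    (w0 : W)
    (x : W) (il : List I)
    (A : List ℕ) (hA : IsMinS s d (x * w0) il A)
    (l : ℕ) (hmem : l ∈ A) :
    wordLength s (vVal s d il A (l - 1)) = wordLength s (vVal s d il A l) + 1 := by
  obtain ⟨hS, -⟩ := hA
  have hl : 1 ≤ l := (hS.2.1 l hmem).1
  obtain ⟨u, v, rfl⟩ := List.append_of_mem hmem
  have hv : v <:+ u ++ l :: v := (List.suffix_cons l v).trans (List.suffix_append _ _)
  rw [hS.vVal_eq_prod_filter, hS.vVal_eq_prod_filter, List.filter_lt_append_cons_eq hS.1,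
    List.filter_pred_lt_append_cons_eq hS.1 hl, hS.wordLength_prod_of_suffix hv,
    hS.wordLength_prod_of_suffix (List.suffix_append _ _), List.length_cons]

/-- If `l` appears in the lexicographically minimal element of `S(x w₀, 𝐢)`, then
`ℓ(v_{l-1}^𝐢) = ℓ(v_l^𝐢) + 1`. -/
theorem vVal_length_succ {I W : Type*} [Group W] (s : I → W) (d : I)
    (hinv : ∀ i, s i * s i = 1)
    (hgen : ∀ w : W, ∃ il : List I, (il.map s).prod = w)
    (w0 : W) (hlong : ∀ w : W, wordLength s w ≤ wordLength s w0)
    (x : W) (il : List I) (hred : IsReducedWord s w0 il)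
    (A : List ℕ) (hA : IsMinS s d (x * w0) il A)
    (l : ℕ) (hl1 : 1 ≤ l) (hl2 : l ≤ il.length) (hmem : l ∈ A) :
    wordLength s (vVal s d il A (l - 1)) = wordLength s (vVal s d il A l) + 1 :=
  vVal_length_succ_general s d w0 x il A hA l hmem
end

section
/- With y_l^i ∈ W defined by y_m^i = e and y_{l−1}^i = y_l^i if l appears in min S(x w₀, i), y_{l−1}^i = s_{β_l^i} y_l^i otherwise (where β_l^i = w_{l−1}^i · α_{i_l}), and v_l^i as defined via the complementary rule, one has y_l^i = w_l^i · v_l^i · w₀⁻¹ for every 0 ≤ l ≤ m. -/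
section Words

variable {I W : Type*}

theorem wl_length [Monoid W] (s : I → W) (il : List I) :
    wl s il il.length = (il.map s).prod := by
  rw [wl, List.take_length]

theorem wl_succ [Monoid W] (s : I → W) (d : I) {il : List I} {l : ℕ} (hl : l < il.length) :
    wl s il (l + 1) = wl s il l * s (il.getD l d) := by
  rw [wl, wl, List.map_take, List.prod_take_succ _ _ (by simpa using hl), List.getElem_map,
    List.getD_eq_getElem il d hl, List.map_take]

theorem vVal_length [Monoid W] (s : I → W) (d : I) (il : List I) (A : List ℕ) :
    vVal s d il A il.length = 1 := by
  simp [vVal]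

theorem vVal_of_lt [Monoid W] (s : I → W) (d : I) {il : List I} (A : List ℕ) {l : ℕ}
    (hl : l < il.length) :
    vVal s d il A l = (if l + 1 ∈ A then s (il.getD l d) else 1) * vVal s d il A (l + 1) := by
  rw [vVal, vVal, show il.length - l = il.length - (l + 1) + 1 by omega, List.range'_succ]
  simp only [List.map_cons, List.prod_cons, Nat.add_sub_cancel]

theorem yVal_length [Group W] (s : I → W) (d : I) (il : List I) (A : List ℕ) :
    yVal s d il A il.length = 1 := by
  simp [yVal]

theorem yVal_of_lt [Group W] (s : I → W) (d : I) {il : List I} (A : List ℕ) {l : ℕ}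
    (hl : l < il.length) :
    yVal s d il A l = (if l + 1 ∈ A then 1 else
      wl s il l * s (il.getD l d) * (wl s il l)⁻¹) * yVal s d il A (l + 1) := by
  rw [yVal, yVal, show il.length - l = il.length - (l + 1) + 1 by omega, List.range'_succ]
  simp only [List.map_cons, List.prod_cons, Nat.add_sub_cancel]

/-- The reflection `s_{β_{l+1}} = w_l s_{i_{l+1}} w_l⁻¹` carries `w_{l+1}` back to `w_l`, which is
what lets the step `l + 1 ∉ A` of `y` be absorbed into the prefix `w_l`. -/
theorem yVal_eq_wl_mul_vVal_mul_inv [Group W] (s : I → W) (d : I)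
    (hinv : ∀ i, s i * s i = 1) (il : List I) (A : List ℕ) {l : ℕ} (hl : l ≤ il.length) :
    yVal s d il A l = wl s il l * vVal s d il A l * (wl s il il.length)⁻¹ := by
  induction hl using Nat.decreasingInduction with
  | self => rw [yVal_length, vVal_length, mul_one, mul_inv_cancel]
  | of_succ l hl ih =>
    rw [yVal_of_lt s d A hl, vVal_of_lt s d A hl, ih, wl_succ s d hl]
    split_ifs
    · group
    · calc _ = wl s il l * (s (il.getD l d) * s (il.getD l d)) * vVal s d il A (l + 1) *
              (wl s il il.length)⁻¹ := by group
        _ = _ := by rw [hinv, mul_one, one_mul]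

end Words

theorem yVal_eq_wl_vVal_general {I W : Type*} [Group W] (s : I → W) (d : I)
    (hinv : ∀ i, s i * s i = 1)
    (w0 : W) (il : List I) (hred : IsReducedWord s w0 il)
    (A : List ℕ) :
    ∀ l ≤ il.length, yVal s d il A l = wl s il l * vVal s d il A l * w0⁻¹ := by
  intro l hl
  rw [yVal_eq_wl_mul_vVal_mul_inv s d hinv il A hl, wl_length, hred.1]

/-- One has `y_l^𝐢 = w_l^𝐢 · v_l^𝐢 · w₀⁻¹` for every `0 ≤ l ≤ m`. -/
theorem yVal_eq_wl_vVal {I W : Type*} [Group W] (s : I → W) (d : I)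
    (hinv : ∀ i, s i * s i = 1)
    (hgen : ∀ w : W, ∃ il : List I, (il.map s).prod = w)
    (w0 : W) (hlong : ∀ w : W, wordLength s w ≤ wordLength s w0)
    (x : W) (il : List I) (hred : IsReducedWord s w0 il)
    (A : List ℕ) (hA : IsMinS s d (x * w0) il A) :
    ∀ l ≤ il.length, yVal s d il A l = wl s il l * vVal s d il A l * w0⁻¹ :=
  yVal_eq_wl_vVal_general s d hinv w0 il hred A
end
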